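/- arXiv:1701.02515 — 3 statements merged into one kernel-verified Lean document; each statement's English description precedes it below -/
import Mathlib

section
/- Let Σ be a Heisenberg group with commutator subgroup [Σ,Σ] of prime order p, let A be a maximal abelian subgroup of Σ, and let χ : A → ℂ^× be a genuine character (i.e., χ is nontrivial on [Σ,Σ]). Then for every e ∈ Σ with e ∉ A, the conjugate character χ^e differs from χ; equivalently, there exists a ∈ A with χ(e a e^{-1} a^{-1}) ≠ 1. In other words, the action of Σ/A on genuine characters of A by conjugation is faithful. -/
/-!
The commutator subgroup `K` is central, so it lies in the maximal abelian subgroup `A`. Since `K`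
has prime order and `χ` is nontrivial on it, `χ` is injective on `K`. If `χ(⁅e, a⁆) = 1` for all
`a ∈ A`, then every `⁅e, a⁆ ∈ K` is trivial, i.e. `e` centralizes `A`; by maximality `e ∈ A`.
-/

/-- A maximal abelian subgroup of a group: it is abelian, and any abelian subgroup
containing it equals it. -/
def IsMaxAbelian {G : Type*} [Group G] (A : Subgroup G) : Prop :=
  (∀ x ∈ A, ∀ y ∈ A, x * y = y * x) ∧
  ∀ B : Subgroup G, (∀ x ∈ B, ∀ y ∈ B, x * y = y * x) → A ≤ B → B = A

open Subgroup

theorem IsMaxAbelian.centralizer_le {G : Type*} [Group G] {A : Subgroup G} (hA : IsMaxAbelian A) :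
    centralizer (A : Set G) ≤ A := by
  intro g hg
  have hcomm : ∀ x ∈ insert g (A : Set G), ∀ y ∈ insert g (A : Set G), x * y = y * x := by
    rintro x (rfl | hx) y (rfl | hy)
    · rfl
    · exact (mem_centralizer_iff.mp hg y hy).symm
    · exact mem_centralizer_iff.mp hg x hx
    · exact hA.1 x hx y hy
  have := isMulCommutative_closure hcomm
  have hB : closure (insert g (A : Set G)) = A :=
    hA.2 _ (fun _ hx _ hy => setLike_mul_comm hx hy)
      (fun _ hx => subset_closure (Set.mem_insert_of_mem g hx))
  exact hB ▸ subset_closure (Set.mem_insert g _)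

theorem IsMaxAbelian.center_le {G : Type*} [Group G] {A : Subgroup G} (hA : IsMaxAbelian A) :
    center G ≤ A :=
  (center_le_centralizer _).trans hA.centralizer_le

theorem MonoidHom.ker_eq_bot_of_prime_card {H M : Type*} [Group H] [MulOneClass M]
    [Fact (Nat.card H).Prime] (φ : H →* M) (hφ : φ ≠ 1) : φ.ker = ⊥ :=
  φ.ker.eq_bot_or_eq_top_of_prime_card.resolve_right fun h => hφ (MonoidHom.ker_eq_top_iff.mp h)

open scoped commutatorElement

theorem heisenberg_conjugation_action_faithful_general
    {G : Type*} [Group G] {p : ℕ} (hp : p.Prime)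
    (hcomm : commutator G ≤ Subgroup.center G)
    (hcard : Nat.card (commutator G) = p)
    (A : Subgroup G) (hA : IsMaxAbelian A)
    (χ : ↥A →* ℂˣ)
    (hgen : ∃ (c : G) (_ : c ∈ commutator G) (hcA : c ∈ A), χ ⟨c, hcA⟩ ≠ 1) :
    ∀ e : G, e ∉ A → ∃ (a : G) (_ : a ∈ A) (h : ⁅e, a⁆ ∈ A), χ ⟨⁅e, a⁆, h⟩ ≠ 1 := by
  have hKA : commutator G ≤ A := hcomm.trans hA.center_le
  have : Fact (Nat.card (commutator G)).Prime := ⟨hcard ▸ hp⟩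
  have hker : (χ.comp (inclusion hKA)).ker = ⊥ := by
    refine MonoidHom.ker_eq_bot_of_prime_card _ fun h => ?_
    obtain ⟨c, hc, _, hχ⟩ := hgen
    exact hχ (DFunLike.congr_fun h ⟨c, hc⟩)
  intro e he
  by_contra! htriv
  refine he (hA.centralizer_le (mem_centralizer_iff.mpr fun a ha => ?_))
  have hea : ⁅e, a⁆ ∈ commutator G := commutator_mem_commutator (mem_top e) (mem_top a)
  have hmem : (⟨⁅e, a⁆, hea⟩ : commutator G) ∈ (χ.comp (inclusion hKA)).ker := htriv a ha (hKA hea)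
  rw [hker, mem_bot, Subtype.ext_iff] at hmem
  exact (commutatorElement_eq_one_iff_mul_comm.mp hmem).symm

/-- Let `Σ` be a Heisenberg group with commutator subgroup of prime order `p`,
`A` a maximal abelian subgroup, and `χ : A → ℂˣ` a genuine character (nontrivial on `[Σ,Σ]`).
Then for every `e ∈ Σ` with `e ∉ A` there is `a ∈ A` with `χ(⁅e,a⁆) ≠ 1` (where
`⁅e,a⁆ = e a e⁻¹ a⁻¹`); i.e. the conjugation action of `Σ/A` on genuine characters of `A`
is faithful. -/
theorem heisenberg_conjugation_action_faithful
    {G : Type*} [Group G] {p : ℕ} (hp : p.Prime)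
    (hfin : (Subgroup.center G).FiniteIndex)
    (hcomm : commutator G ≤ Subgroup.center G)
    (hcard : Nat.card (commutator G) = p)
    (A : Subgroup G) (hA : IsMaxAbelian A)
    (χ : ↥A →* ℂˣ)
    (hgen : ∃ (c : G) (_ : c ∈ commutator G) (hcA : c ∈ A), χ ⟨c, hcA⟩ ≠ 1) :
    ∀ e : G, e ∉ A → ∃ (a : G) (_ : a ∈ A) (h : ⁅e, a⁆ ∈ A), χ ⟨⁅e, a⁆, h⟩ ≠ 1 :=
  heisenberg_conjugation_action_faithful_general hp hcomm hcard A hA χ hgen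
end

section
/- Let Σ be a Heisenberg group with commutator subgroup [Σ,Σ] of prime order p, let Σ₁ be a maximal abelian subgroup of Σ, and let λ₁, λ₂ : Σ₁ → ℂ^× be genuine characters. Then Ind_{Σ₁}^{Σ} λ₁ ≅ Ind_{Σ₁}^{Σ} λ₂ if and only if λ₁ = λ₂^s for some s ∈ Σ, where λ₂^s(x) = λ₂(s x s^{-1}). -/
/-- The space of the representation of `G` induced from a character `lam` of a subgroup `A`:
functions `f : G → ℂ` with `f(ax) = lam(a) f(x)` for `a ∈ A`. -/
noncomputable def IndSpace {G : Type*} [Group G] (A : Subgroup G) (lam : ↥A →* ℂˣ) :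
    Submodule ℂ (G → ℂ) where
  carrier := {f | ∀ (a : ↥A) (x : G), f (↑a * x) = (lam a : ℂ) * f x}
  add_mem' := by
    intro f g hf hg a x
    simp only [Pi.add_apply, hf a x, hg a x]
    ring
  zero_mem' := by
    intro a x
    simp
  smul_mem' := by
    intro c f hf a x
    simp only [Pi.smul_apply, hf a x, smul_eq_mul]
    ring

theorem mem_IndSpace {G : Type*} [Group G] {A : Subgroup G} {lam : ↥A →* ℂˣ} {f : G → ℂ} :
    f ∈ IndSpace A lam ↔ ∀ (a : ↥A) (x : G), f (↑a * x) = (lam a : ℂ) * f x :=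
  Iff.rfl

/-- The representation of `G` induced from a character `lam` of a subgroup `A`,
acting by right translation on `IndSpace A lam`. -/
noncomputable def IndRep {G : Type*} [Group G] (A : Subgroup G) (lam : ↥A →* ℂˣ) :
    Representation ℂ G ↥(IndSpace A lam) where
  toFun g :=
    { toFun := fun f => ⟨fun x => (f : G → ℂ) (x * g), by
        intro a x
        have h := mem_IndSpace.mp f.2 a (x * g)
        simpa [mul_assoc] using h⟩
      map_add' := by intro f₁ f₂; ext x; rfl
      map_smul' := by intro c f; ext x; rfl }
  map_one' := by
    ext f x
    simp
  map_mul' := by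
    intro g h
    ext f x
    simp [mul_assoc]

/-- A representation is irreducible if the space is nonzero and the only invariant
subspaces are `⊥` and `⊤`. -/
def IsIrredRep {G : Type*} [Group G] {V : Type*} [AddCommGroup V] [Module ℂ V]
    (ρ : Representation ℂ G V) : Prop :=
  (∃ v : V, v ≠ 0) ∧
  ∀ W : Submodule ℂ V, (∀ g : G, ∀ w ∈ W, ρ g w ∈ W) → W = ⊥ ∨ W = ⊤

/-- Two representations are isomorphic if there is an equivariant linear equivalence. -/
def RepIso {G : Type*} [Group G] {V₁ V₂ : Type*} [AddCommGroup V₁] [Module ℂ V₁]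
    [AddCommGroup V₂] [Module ℂ V₂]
    (ρ₁ : Representation ℂ G V₁) (ρ₂ : Representation ℂ G V₂) : Prop :=
  ∃ e : V₁ ≃ₗ[ℂ] V₂, ∀ (g : G) (v : V₁), e (ρ₁ g v) = ρ₂ g (e v)

namespace IsMaxAbelian

variable {G : Type*} [Group G] {A : Subgroup G}

theorem center_le_s5 (hA : IsMaxAbelian A) : Subgroup.center G ≤ A := by
  set B := A ⊔ Subgroup.center G
  have hAB : A ≤ Subgroup.centralizer (B : Set G) :=
    Subgroup.le_centralizer_iff.mp <| sup_le
      (fun y hy => Subgroup.mem_centralizer_iff.mpr fun x hx => hA.1 x hx y hy)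
      (Subgroup.center_le_centralizer _)
  have hB : B ≤ Subgroup.centralizer (B : Set G) :=
    sup_le hAB (Subgroup.center_le_centralizer _)
  have hBA : B = A :=
    hA.2 B (fun x hx y hy => Subgroup.mem_centralizer_iff.mp (hB hy) x hx) le_sup_left
  exact hBA ▸ le_sup_right

theorem normal (hA : IsMaxAbelian A) (hcomm : commutator G ≤ Subgroup.center G) : A.Normal :=
  .of_commutator_le (G := G) (hcomm.trans hA.center_le_s5)

end IsMaxAbelian

section Induced

variable {G : Type*} [Group G] {A : Subgroup G}

/-- `lam₁ = lam₂ˢ`, read on those `x ∈ A` with `s x s⁻¹ ∈ A`. -/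
def IsConjugateCharBy (lam₁ lam₂ : ↥A →* ℂˣ) (s : G) : Prop :=
  ∀ (x : G) (hx : x ∈ A) (hx' : s * x * s⁻¹ ∈ A), lam₁ ⟨x, hx⟩ = lam₂ ⟨s * x * s⁻¹, hx'⟩

theorem IsConjugateCharBy.symm {lam₁ lam₂ : ↥A →* ℂˣ} {s : G}
    (h : IsConjugateCharBy lam₁ lam₂ s) : IsConjugateCharBy lam₂ lam₁ s⁻¹ := by
  intro x hx hx'
  have hsx : s * (s⁻¹ * x * s⁻¹⁻¹) * s⁻¹ = x := by group
  rw [h _ hx' (by rwa [hsx])]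
  exact congrArg lam₂ (Subtype.ext hsx.symm)

theorem mem_indSpace_comp_mul_left [hA : A.Normal] {lam₁ lam₂ : ↥A →* ℂˣ} {s : G}
    (h : IsConjugateCharBy lam₁ lam₂ s) {f : G → ℂ} (hf : f ∈ IndSpace A lam₂) :
    (fun x => f (s * x)) ∈ IndSpace A lam₁ := by
  intro a x
  have hsa : s * a * s⁻¹ ∈ A := hA.conj_mem a a.2 s
  calc f (s * (a * x)) = f (s * a * s⁻¹ * (s * x)) := by group
    _ = lam₂ ⟨s * a * s⁻¹, hsa⟩ * f (s * x) := hf ⟨_, hsa⟩ (s * x)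
    _ = lam₁ a * f (s * x) := by rw [h a a.2 hsa]

def indSpaceTranslate [A.Normal] {lam₁ lam₂ : ↥A →* ℂˣ} {s : G}
    (h : IsConjugateCharBy lam₁ lam₂ s) : IndSpace A lam₁ ≃ₗ[ℂ] IndSpace A lam₂ where
  toFun f := ⟨fun x => f.1 (s⁻¹ * x), mem_indSpace_comp_mul_left h.symm f.2⟩
  invFun f := ⟨fun x => f.1 (s * x), mem_indSpace_comp_mul_left h f.2⟩
  map_add' _ _ := rfl
  map_smul' _ _ := rfl
  left_inv f := by ext x; simp
  right_inv f := by ext x; simp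

theorem repIso_indRep_of_isConjugateCharBy [A.Normal] {lam₁ lam₂ : ↥A →* ℂˣ} {s : G}
    (h : IsConjugateCharBy lam₁ lam₂ s) : RepIso (IndRep A lam₁) (IndRep A lam₂) :=
  ⟨indSpaceTranslate h, fun g f => by
    ext x
    exact congrArg f.1 (mul_assoc _ _ _)⟩

open scoped Classical in
noncomputable def charExtendByZero (lam : ↥A →* ℂˣ) : IndSpace A lam :=
  ⟨fun x => if hx : x ∈ A then (lam ⟨x, hx⟩ : ℂ) else 0, by
    intro a x
    by_cases hx : x ∈ A
    · simp only [dif_pos hx, dif_pos (A.mul_mem a.2 hx)]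
      exact congrArg Units.val (map_mul lam a ⟨x, hx⟩)
    · have hax : (a : G) * x ∉ A := fun hax => hx (by simpa using A.mul_mem (A.inv_mem a.2) hax)
      simp [hx, hax]⟩

theorem charExtendByZero_ne_zero (lam : ↥A →* ℂˣ) : charExtendByZero lam ≠ 0 := by
  intro h
  simpa [charExtendByZero] using congrFun (congrArg Subtype.val h) 1

open scoped Classical in
theorem indRep_charExtendByZero (lam : ↥A →* ℂˣ) (a : A) :
    IndRep A lam a (charExtendByZero lam) = (lam a : ℂ) • charExtendByZero lam := by
  ext x
  change (if hx : x * a ∈ A then (lam ⟨x * a, hx⟩ : ℂ) else 0)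
    = lam a * if hx : x ∈ A then (lam ⟨x, hx⟩ : ℂ) else 0
  by_cases hx : x ∈ A
  · rw [dif_pos hx, dif_pos (A.mul_mem hx a.2), ← Units.val_mul, mul_comm]
    exact congrArg Units.val (map_mul lam ⟨x, hx⟩ a)
  · have hxa : x * a ∉ A := fun hxa => hx (by simpa using A.mul_mem hxa (A.inv_mem a.2))
    simp [hx, hxa]

theorem isConjugateCharBy_of_apply_ne_zero {lam₁ lam₂ : ↥A →* ℂˣ} {f : G → ℂ}
    (hf : f ∈ IndSpace A lam₂) (hright : ∀ (a : A) (x : G), f (x * a) = lam₁ a * f x)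
    {s : G} (hs : f s ≠ 0) : IsConjugateCharBy lam₁ lam₂ s := by
  intro x hx hx'
  apply Units.ext
  apply mul_right_cancel₀ hs
  calc (lam₁ ⟨x, hx⟩ : ℂ) * f s = f (s * x) := (hright ⟨x, hx⟩ s).symm
    _ = f (s * x * s⁻¹ * s) := by group
    _ = lam₂ ⟨s * x * s⁻¹, hx'⟩ * f s := hf ⟨_, hx'⟩ s

theorem exists_isConjugateCharBy_of_repIso {lam₁ lam₂ : ↥A →* ℂˣ}
    (hiso : RepIso (IndRep A lam₁) (IndRep A lam₂)) : ∃ s, IsConjugateCharBy lam₁ lam₂ s := by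
  obtain ⟨e, he⟩ := hiso
  set f := e (charExtendByZero lam₁)
  have hright (a : A) (x : G) : f.1 (x * a) = lam₁ a * f.1 x := by
    have := he a (charExtendByZero lam₁)
    rw [indRep_charExtendByZero, map_smul] at this
    exact congrFun (congrArg Subtype.val this.symm) x
  have hf : f ≠ 0 := (map_ne_zero_iff e e.injective).mpr (charExtendByZero_ne_zero lam₁)
  obtain ⟨s, hs⟩ : ∃ s, f.1 s ≠ 0 := by
    by_contra! h
    exact hf (Subtype.ext (funext h))
  exact ⟨s, isConjugateCharBy_of_apply_ne_zero f.2 hright hs⟩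

end Induced

theorem heisenberg_induced_iso_iff_conjugate_general
    {G : Type*} [Group G]
    (hcomm : commutator G ≤ Subgroup.center G)
    (S₁ : Subgroup G) (hS₁ : IsMaxAbelian S₁)
    (lam₁ lam₂ : ↥S₁ →* ℂˣ) :
    RepIso (IndRep S₁ lam₁) (IndRep S₁ lam₂) ↔
      ∃ s : G, ∀ (x : G) (hx : x ∈ S₁) (hx' : s * x * s⁻¹ ∈ S₁),
        lam₁ ⟨x, hx⟩ = lam₂ ⟨s * x * s⁻¹, hx'⟩ := by
  have := hS₁.normal hcomm
  exact ⟨exists_isConjugateCharBy_of_repIso, fun ⟨_, h⟩ => repIso_indRep_of_isConjugateCharBy h⟩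

/-- Let `Σ` be a Heisenberg group with commutator subgroup of prime order `p`,
`Σ₁` a maximal abelian subgroup, and `λ₁, λ₂ : Σ₁ → ℂˣ` genuine characters.  Then
`Ind_{Σ₁}^{Σ} λ₁ ≅ Ind_{Σ₁}^{Σ} λ₂` if and only if `λ₁ = λ₂ˢ` for some `s ∈ Σ`,
where `λ₂ˢ(x) = λ₂(s x s⁻¹)`. -/
theorem heisenberg_induced_iso_iff_conjugate
    {G : Type*} [Group G] {p : ℕ} (hp : p.Prime)
    (hfin : (Subgroup.center G).FiniteIndex)
    (hcomm : commutator G ≤ Subgroup.center G)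
    (hcard : Nat.card (commutator G) = p)
    (S₁ : Subgroup G) (hS₁ : IsMaxAbelian S₁)
    (lam₁ lam₂ : ↥S₁ →* ℂˣ)
    (hgen₁ : ∃ (c : G) (_ : c ∈ commutator G) (hcA : c ∈ S₁), lam₁ ⟨c, hcA⟩ ≠ 1)
    (hgen₂ : ∃ (c : G) (_ : c ∈ commutator G) (hcA : c ∈ S₁), lam₂ ⟨c, hcA⟩ ≠ 1) :
    RepIso (IndRep S₁ lam₁) (IndRep S₁ lam₂) ↔
      ∃ s : G, ∀ (x : G) (hx : x ∈ S₁) (hx' : s * x * s⁻¹ ∈ S₁),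
        lam₁ ⟨x, hx⟩ = lam₂ ⟨s * x * s⁻¹, hx'⟩ :=
  heisenberg_induced_iso_iff_conjugate_general hcomm S₁ hS₁ lam₁ lam₂
end

section
/- Let O be the ring of integers of a non-Archimedean local field of odd residue characteristic, with uniformizer ϖ, and let m ≥ 1. Let Γ₀(ϖ^m) be the subgroup of SL₂(O) consisting of matrices whose lower-left entry lies in ϖ^m O. Then every group homomorphism χ : Γ₀(ϖ^m) → {±1} that is trivial on all diagonal matrices diag(u, u^{-1}) with u ∈ O^× is trivial. -/
/-!
Since `2` is a unit, every unipotent `!![1, b; 0, 1]` is the square of `!![1, b/2; 0, 1]`, and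
likewise for lower unipotents with entry in `(x)`; a character of order two kills squares, hence
both unipotent subgroups. When `x` lies in the maximal ideal, the upper-left entry `a` of any
`A ∈ Γ₀(x)` is a unit (`ad = 1 + bc` with `c ∈ (x)`), so `A` has the decomposition
`A = !![1, 0; c/a, 1] * diag(a, a⁻¹) * !![1, b/a; 0, 1]` into factors on which the character is
trivial.
-/

/-- The congruence subgroup `Γ₀(x)` of `SL₂(O)`: matrices whose lower-left entry lies in the
ideal generated by `x`. -/
def Gamma0 (O : Type*) [CommRing O] (x : O) :
    Subgroup (Matrix.SpecialLinearGroup (Fin 2) O) where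
  carrier := {A | (A : Matrix (Fin 2) (Fin 2) O) 1 0 ∈ Ideal.span {x}}
  one_mem' := by
    simp only [Set.mem_setOf_eq]
    simp
  mul_mem' := by
    intro A B hA hB
    simp only [Set.mem_setOf_eq] at hA hB ⊢
    have h : ((A * B : Matrix.SpecialLinearGroup (Fin 2) O) : Matrix (Fin 2) (Fin 2) O) 1 0 =
        (A : Matrix (Fin 2) (Fin 2) O) 1 0 * (B : Matrix (Fin 2) (Fin 2) O) 0 0 +
        (A : Matrix (Fin 2) (Fin 2) O) 1 1 * (B : Matrix (Fin 2) (Fin 2) O) 1 0 := by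
      simp [Matrix.mul_apply, Fin.sum_univ_two]
    rw [h]
    exact Ideal.add_mem _ (Ideal.mul_mem_right _ _ hA) (Ideal.mul_mem_left _ _ hB)
  inv_mem' := by
    intro A hA
    simp only [Set.mem_setOf_eq] at hA ⊢
    have h : ((A⁻¹ : Matrix.SpecialLinearGroup (Fin 2) O) : Matrix (Fin 2) (Fin 2) O) 1 0 =
        -(A : Matrix (Fin 2) (Fin 2) O) 1 0 := by
      simp [Matrix.SpecialLinearGroup.coe_inv, Matrix.adjugate_fin_two]
    rw [h]
    exact neg_mem hA

/-- The diagonal matrix `diag(u, u⁻¹)` as an element of `SL₂(O)`. -/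
def diagSL {O : Type*} [CommRing O] (u : Oˣ) : Matrix.SpecialLinearGroup (Fin 2) O :=
  ⟨!![(u : O), 0; 0, ((u⁻¹ : Oˣ) : O)], by
    simp [Matrix.det_fin_two_of]⟩

open Matrix IsLocalRing

section SL2

variable {R : Type*} [CommRing R]

def upperSL (b : R) : SpecialLinearGroup (Fin 2) R :=
  ⟨!![1, b; 0, 1], by simp [det_fin_two_of]⟩

def lowerSL (c : R) : SpecialLinearGroup (Fin 2) R :=
  ⟨!![1, 0; c, 1], by simp [det_fin_two_of]⟩

@[simp]
theorem coe_upperSL (b : R) : (upperSL b : Matrix (Fin 2) (Fin 2) R) = !![1, b; 0, 1] := rfl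

@[simp]
theorem coe_lowerSL (c : R) : (lowerSL c : Matrix (Fin 2) (Fin 2) R) = !![1, 0; c, 1] := rfl

@[simp]
theorem coe_diagSL (u : Rˣ) :
    (diagSL u : Matrix (Fin 2) (Fin 2) R) = !![(u : R), 0; 0, ((u⁻¹ : Rˣ) : R)] := rfl

theorem upperSL_add (b b' : R) : upperSL (b + b') = upperSL b * upperSL b' :=
  Subtype.ext <| by simp [add_comm]

theorem lowerSL_add (c c' : R) : lowerSL (c + c') = lowerSL c * lowerSL c' :=
  Subtype.ext <| by simp

theorem eq_lowerSL_mul_diagSL_mul_upperSL (A : SpecialLinearGroup (Fin 2) R) (u : Rˣ)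
    (hu : (u : R) = A 0 0) :
    A = lowerSL (A 1 0 * ↑u⁻¹) * diagSL u * upperSL (↑u⁻¹ * A 0 1) := by
  have hdet : A 0 0 * A 1 1 - A 0 1 * A 1 0 = 1 := by
    rw [← det_fin_two]; exact A.prop
  have hinv : (↑u⁻¹ : R) * u = 1 := u.inv_mul
  ext i j
  fin_cases i <;> fin_cases j <;> simp [mul_apply, Fin.sum_univ_two]
  · exact hu.symm
  · linear_combination ↑u⁻¹ * hdet - A 1 1 * hinv + ↑u⁻¹ * A 1 1 * hu

end SL2

theorem IsUnit.inv_mul_add_inv_mul_self {R : Type*} [CommRing R] (h2 : IsUnit (2 : R)) (c : R) :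
    ↑h2.unit⁻¹ * c + ↑h2.unit⁻¹ * c = c := by
  rw [← two_mul, ← mul_assoc, h2.mul_val_inv, one_mul]

theorem isUnit_two_of_ringChar_residueField_ne_two {R : Type*} [CommRing R] [IsLocalRing R]
    (h : ringChar (ResidueField R) ≠ 2) : IsUnit (2 : R) :=
  (residue_ne_zero_iff_isUnit 2).mp (by rw [map_ofNat]; exact Ring.two_ne_zero h)

namespace Gamma0

variable {R : Type*} [CommRing R] {x : R}

theorem mem_iff {A : SpecialLinearGroup (Fin 2) R} : A ∈ Gamma0 R x ↔ A 1 0 ∈ Ideal.span {x} :=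
  Iff.rfl

theorem upperSL_mem (x b : R) : upperSL b ∈ Gamma0 R x := by
  simp [mem_iff]

theorem lowerSL_mem {c : R} (hc : c ∈ Ideal.span {x}) : lowerSL c ∈ Gamma0 R x := by
  simpa [mem_iff] using hc

theorem diagSL_mem (x : R) (u : Rˣ) : diagSL u ∈ Gamma0 R x := by
  simp [mem_iff]

theorem isUnit_coe_zero_zero [IsLocalRing R] (hx : x ∈ maximalIdeal R)
    {A : SpecialLinearGroup (Fin 2) R} (hA : A ∈ Gamma0 R x) : IsUnit (A 0 0) := by
  have hdet : A 0 0 * A 1 1 - A 0 1 * A 1 0 = 1 := by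
    rw [← det_fin_two]; exact A.prop
  have hc : A 1 0 ∈ maximalIdeal R := (Ideal.span_singleton_le_iff_mem _).mpr hx hA
  by_contra ha
  have h1 : A 0 0 * A 1 1 - A 0 1 * A 1 0 ∈ maximalIdeal R :=
    sub_mem (Ideal.mul_mem_right _ _ ha) (Ideal.mul_mem_left _ _ hc)
  exact (maximalIdeal.isMaximal R).ne_top ((Ideal.eq_top_iff_one _).mpr (hdet ▸ h1))

variable {G : Type*} [Group G] (hG : ∀ g : G, g * g = 1) (χ : Gamma0 R x →* G)
include hG

theorem map_upperSL_eq_one (h2 : IsUnit (2 : R)) (b : R) :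
    χ ⟨upperSL b, upperSL_mem x b⟩ = 1 := by
  set b' := ↑h2.unit⁻¹ * b
  have hsq : (⟨upperSL b, upperSL_mem x b⟩ : Gamma0 R x) =
      ⟨upperSL b', upperSL_mem x b'⟩ * ⟨upperSL b', upperSL_mem x b'⟩ :=
    Subtype.ext (by rw [Subgroup.coe_mul, ← upperSL_add, h2.inv_mul_add_inv_mul_self])
  rw [hsq, map_mul, hG]

theorem map_lowerSL_eq_one (h2 : IsUnit (2 : R)) {c : R} (hc : c ∈ Ideal.span {x}) :
    χ ⟨lowerSL c, lowerSL_mem hc⟩ = 1 := by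
  have hc' : ↑h2.unit⁻¹ * c ∈ Ideal.span {x} := Ideal.mul_mem_left _ _ hc
  have hsq : (⟨lowerSL c, lowerSL_mem hc⟩ : Gamma0 R x) =
      ⟨lowerSL _, lowerSL_mem hc'⟩ * ⟨lowerSL _, lowerSL_mem hc'⟩ :=
    Subtype.ext (by rw [Subgroup.coe_mul, ← lowerSL_add, h2.inv_mul_add_inv_mul_self])
  rw [hsq, map_mul, hG]

theorem eq_one_of_map_diagSL_eq_one [IsLocalRing R] (h2 : IsUnit (2 : R))
    (hx : x ∈ maximalIdeal R)
    (hdiag : ∀ (u : Rˣ) (h : diagSL u ∈ Gamma0 R x), χ ⟨diagSL u, h⟩ = 1) : χ = 1 := by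
  ext ⟨A, hA⟩
  obtain ⟨u, hu⟩ := isUnit_coe_zero_zero hx hA
  have hc : A 1 0 * ↑u⁻¹ ∈ Ideal.span {x} := Ideal.mul_mem_right _ _ hA
  have hLDU : (⟨A, hA⟩ : Gamma0 R x) =
      ⟨lowerSL _, lowerSL_mem hc⟩ * ⟨diagSL u, diagSL_mem x u⟩ *
        ⟨upperSL _, upperSL_mem x (↑u⁻¹ * A 0 1)⟩ :=
    Subtype.ext (eq_lowerSL_mul_diagSL_mul_upperSL A u hu)
  rw [hLDU, map_mul, map_mul, map_lowerSL_eq_one hG χ h2 hc, hdiag,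
    map_upperSL_eq_one hG χ h2, MonoidHom.one_apply, mul_one, mul_one]

end Gamma0

theorem gamma0_quadratic_character_trivial_on_diagonal_is_trivial_general
    (O : Type*) [CommRing O] [IsDomain O] [IsDiscreteValuationRing O]
    (hodd : ringChar (IsLocalRing.ResidueField O) ≠ 2)
    (ϖ : O) (hϖ : Irreducible ϖ) (m : ℕ) (hm : 1 ≤ m)
    (χ : ↥(Gamma0 O (ϖ ^ m)) →* ℤˣ)
    (hdiag : ∀ (u : Oˣ) (h : diagSL u ∈ Gamma0 O (ϖ ^ m)), χ ⟨diagSL u, h⟩ = 1) :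
    χ = 1 :=
  Gamma0.eq_one_of_map_diagSL_eq_one Int.units_mul_self χ
    (isUnit_two_of_ringChar_residueField_ne_two hodd)
    (Ideal.pow_mem_of_mem _ ((mem_maximalIdeal ϖ).mpr hϖ.not_isUnit) m hm) hdiag

/-- Let `O` be the ring of integers of a non-Archimedean local field of odd
residue characteristic, with uniformizer `ϖ`, and let `m ≥ 1`.  Then every group homomorphism
`χ : Γ₀(ϖ^m) → {±1}` that is trivial on all diagonal matrices `diag(u, u⁻¹)`, `u ∈ O^×`,
is trivial. -/
theorem gamma0_quadratic_character_trivial_on_diagonal_is_trivial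
    (O : Type*) [CommRing O] [IsDomain O] [IsDiscreteValuationRing O]
    [IsAdicComplete (IsLocalRing.maximalIdeal O) O]
    [Finite (IsLocalRing.ResidueField O)]
    (hodd : ringChar (IsLocalRing.ResidueField O) ≠ 2)
    (ϖ : O) (hϖ : Irreducible ϖ) (m : ℕ) (hm : 1 ≤ m)
    (χ : ↥(Gamma0 O (ϖ ^ m)) →* ℤˣ)
    (hdiag : ∀ (u : Oˣ) (h : diagSL u ∈ Gamma0 O (ϖ ^ m)), χ ⟨diagSL u, h⟩ = 1) :
    χ = 1 :=
  gamma0_quadratic_character_trivial_on_diagonal_is_trivial_general O hodd ϖ hϖ m hm χ hdiag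
end
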